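/- Let s be a simple reflection of Wᵛ and v ∈ Wᵛ with sv > v (i.e. ℓ(sv) > ℓ(v)). Then for every w ∈ Wᵛ, ℓ_{sv}(w) = ℓ_v(sw) − 1, where ℓ_v(w) = |Inv(w⁻¹)∖Inv(v⁻¹)| − |Inv(w⁻¹)∩Inv(v⁻¹)|. -/

import Mathlib

/-- Sign of an integer, with the convention `isgn 0 = 1`. -/
def isgn (n : ℤ) : ℤ := if 0 ≤ n then 1 else -1

/-- The multiplicative group structure on `AddAut A` (composition), as in the older Mathlib. -/
instance AddAut.group {A : Type*} [Add A] : Group (AddAut A) where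
  mul g h := AddEquiv.trans h g
  one := AddEquiv.refl _
  inv := AddEquiv.symm
  mul_assoc _ _ _ := rfl
  one_mul _ := rfl
  mul_one _ := rfl
  inv_mul_cancel := AddEquiv.self_trans_symm

/-- A Kac–Moody root datum: a finite index set `I`, a generalized Cartan matrix `A`,
free `ℤ`-modules `X` and `Y` of finite rank in perfect duality `pairE`, and linearly
independent families of simple roots `α` and simple coroots `αv` with
`⟨αv i, α j⟩ = A i j`. -/
structure KM (I X Y : Type*) [Fintype I] [AddCommGroup X] [AddCommGroup Y] where
  A : I → I → ℤ
  pairE : Y ≃+ (X →+ ℤ)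
  α : I → X
  αv : I → Y
  pair_av_a : ∀ i j, pairE (αv i) (α j) = A i j
  A_diag : ∀ i, A i i = 2
  A_offdiag : ∀ i j, i ≠ j → A i j ≤ 0
  A_zero_iff : ∀ i j, A i j = 0 → A j i = 0
  freeX : Module.Free ℤ X
  freeY : Module.Free ℤ Y
  finX : Module.Finite ℤ X
  finY : Module.Finite ℤ Y
  indep_α : LinearIndependent ℤ α
  indep_αv : LinearIndependent ℤ αv

namespace KM

variable {I X Y : Type*} [Fintype I] [AddCommGroup X] [AddCommGroup Y] (D : KM I X Y)

open scoped Classical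

/-- The duality pairing `⟨y, x⟩`. -/
def pr (y : Y) (x : X) : ℤ := D.pairE y x

/-- Underlying function of the simple reflection `s_i` on `X`. -/
def sXfun (i : I) (x : X) : X := x - D.pr (D.αv i) x • D.α i

lemma sX_invol (i : I) : Function.Involutive (D.sXfun i) := by
  intro x
  have h2 : D.pairE (D.αv i) (D.α i) = 2 := by rw [D.pair_av_a, D.A_diag]
  show (x - D.pairE (D.αv i) x • D.α i) -
      D.pairE (D.αv i) (x - D.pairE (D.αv i) x • D.α i) • D.α i = x
  rw [map_sub, map_zsmul, h2, smul_eq_mul]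
  have h : D.pairE (D.αv i) x - D.pairE (D.αv i) x * 2 = -(D.pairE (D.αv i) x) := by ring
  rw [h, neg_smul]
  abel

/-- The simple reflection `s_i : x ↦ x - ⟨αv i, x⟩ • α i` as an automorphism of `X`. -/
def sX (i : I) : AddAut X :=
  AddEquiv.mk' (D.sX_invol i).toPerm (by
    intro x y
    show ((x + y) - D.pairE (D.αv i) (x + y) • D.α i)
        = (x - D.pairE (D.αv i) x • D.α i) + (y - D.pairE (D.αv i) y • D.α i)
    rw [map_add, add_smul]
    abel)

/-- The vectorial Weyl group `Wᵛ`, as the subgroup of `AddAut X` generated by the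
simple reflections. -/
def Wg : Subgroup (AddAut X) := Subgroup.closure (Set.range D.sX)

/-- The contragredient action of an automorphism `f` of `X` on `Y`; it is characterized by
`⟨actY f y, x⟩ = ⟨y, f⁻¹ x⟩`. -/
def actY (f : AddAut X) (y : Y) : Y :=
  D.pairE.symm ((D.pairE y).comp (AddEquiv.toAddMonoidHom (AddEquiv.symm f)))

/-- The set of real roots `Φ = Wᵛ · {α i}`. -/
def Phi : Set X := {x | ∃ p : AddAut X × I, p.1 ∈ D.Wg ∧ x = p.1 (D.α p.2)}

/-- The set of positive real roots `Φ₊`. -/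
def PhiPos : Set X := {x | x ∈ D.Phi ∧ ∃ c : I → ℕ, x = ∑ i, (c i : ℤ) • D.α i}

/-- The set of negative real roots `Φ₋ = -Φ₊`. -/
def PhiNeg : Set X := {x | -x ∈ D.PhiPos}

/-- The coroot `β^∨` of a real root `β`: if `β = w (α i)` then `β^∨ = w (αv i)`
(this is independent of the chosen expression). -/
noncomputable def coroot (x : X) : Y :=
  if h : ∃ p : AddAut X × I, p.1 ∈ D.Wg ∧ x = p.1 (D.α p.2) then
    D.actY h.choose.1 (D.αv h.choose.2)
  else 0

/-- The reflection `s_β` associated to a real root `β`: if `β = w (α i)` then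
`s_β = w s_i w⁻¹` (independent of the chosen expression). -/
noncomputable def srefl (x : X) : AddAut X :=
  if h : ∃ p : AddAut X × I, p.1 ∈ D.Wg ∧ x = p.1 (D.α p.2) then
    h.choose.1 * D.sX h.choose.2 * h.choose.1⁻¹
  else 1

/-- The integral fundamental chamber `Y^{++}` of dominant coweights. -/
def Ypp : Set Y := {y | ∀ i, 0 ≤ D.pr y (D.α i)}

/-- The integral Tits cone `Y⁺ = Wᵛ · Y^{++}`. -/
def Yplus : Set Y := {y | ∃ p : AddAut X × Y, p.1 ∈ D.Wg ∧ p.2 ∈ D.Ypp ∧ y = D.actY p.1 p.2}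

/-- The dominant representative `λ^{++}` of `λ ∈ Y⁺` (the unique dominant element of the
orbit `Wᵛ · λ`). -/
noncomputable def dompp (y : Y) : Y :=
  if h : ∃ p : AddAut X × Y, p.1 ∈ D.Wg ∧ p.2 ∈ D.Ypp ∧ y = D.actY p.1 p.2 then
    h.choose.2
  else y

/-- The inversion set `Inv(w) = {α ∈ Φ₊ | w α ∈ Φ₋}`. -/
def invSet (w : AddAut X) : Set X := {a | a ∈ D.PhiPos ∧ w a ∈ D.PhiNeg}

/-- The Bruhat length `ℓ(w) = |Inv(w)|`. -/
noncomputable def len (w : AddAut X) : ℕ := (D.invSet w).ncard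

/-- The relative length `ℓ_v(w) = |Inv(w⁻¹)∖Inv(v⁻¹)| − |Inv(w⁻¹)∩Inv(v⁻¹)|`. -/
noncomputable def rlen (v w : AddAut X) : ℤ :=
  ((D.invSet w⁻¹ \ D.invSet v⁻¹).ncard : ℤ) - ((D.invSet w⁻¹ ∩ D.invSet v⁻¹).ncard : ℤ)

/-- `v^λ`: the minimal-length element of `Wᵛ` sending `λ^{++}` to `λ`. -/
noncomputable def vmin (l : Y) : AddAut X :=
  if h : ∃ w : AddAut X, w ∈ D.Wg ∧ D.actY w (D.dompp l) = l ∧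
      ∀ w' : AddAut X, w' ∈ D.Wg → D.actY w' (D.dompp l) = l → D.len w ≤ D.len w'
  then h.choose else 1

/-- The set of reflections of `Wᵛ`. -/
def reflections : Set (AddAut X) := {r | ∃ b ∈ D.PhiPos, r = D.srefl b}

/-- One step of the Bruhat order on `Wᵛ`. -/
def vectStep (u u' : AddAut X) : Prop :=
  ∃ r ∈ D.reflections, u' = u * r ∧ D.len u < D.len u'

/-- The Bruhat order on `Wᵛ`. -/
def vlt : AddAut X → AddAut X → Prop := Relation.TransGen D.vectStep

/-- One step of the relative Bruhat order `<_v` on `Wᵛ`. -/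
def rvStep (v u u' : AddAut X) : Prop :=
  ∃ r ∈ D.reflections, u' = u * r ∧ D.rlen v u < D.rlen v u'

/-- The relative Bruhat order `<_v` on `Wᵛ`. -/
def rvlt (v : AddAut X) : AddAut X → AddAut X → Prop := Relation.TransGen (D.rvStep v)

/-- The stabilizer `W_λ` of `λ` in `Wᵛ`. -/
def Wstab (l : Y) : Set (AddAut X) := {u | u ∈ D.Wg ∧ D.actY u l = l}

/-- `v` is the minimal-length representative of its coset `v W_λ`. -/
def IsMinRep (l : Y) (v : AddAut X) : Prop :=
  v ∈ D.Wg ∧ ∀ u ∈ D.Wstab l, D.len v ≤ D.len (v * u)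

/-- The action of `π^λ w ∈ Y ⋊ Wᵛ` on affine roots:
`π^λ w (β + nπ) = w β + (n + ⟨λ, w β⟩)π`. -/
def affAct (a : Y × AddAut X) (r : X × ℤ) : X × ℤ :=
  (a.2 r.1, r.2 + D.pr a.1 (a.2 r.1))

/-- The set `Φᵃ₊` of positive affine roots. -/
def PhiAffPos : Set (X × ℤ) :=
  {r | r.1 ∈ D.Phi ∧ (0 < r.2 ∨ (r.2 = 0 ∧ r.1 ∈ D.PhiPos))}

/-- The affine root `β[n] = sgn(n)β + |n|π`. -/
def aroot (b : X) (n : ℤ) : X × ℤ := (isgn n • b, |n|)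

/-- The affine reflection `s_{β[n]} = π^{nβ^∨} s_β`, as an element of `Y ⋊ Wᵛ`. -/
noncomputable def saff (b : X) (n : ℤ) : Y × AddAut X := (n • D.coroot b, D.srefl b)

/-- Multiplication in the semidirect product `Y ⋊ Wᵛ`:
`π^λ w · π^μ v = π^{λ + w μ} (w v)`. -/
def mulA (a b : Y × AddAut X) : Y × AddAut X := (a.1 + D.actY a.2 b.1, a.2 * b.2)

/-- One step `x < x·s_{β[n]}` of the affine Bruhat order on `W⁺`, for `β ∈ Φ₊`, `n ∈ ℤ`,
requiring both elements to lie in `W⁺` and `x(β[n]) ∈ Φᵃ₊`. -/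
def astep (a b : Y × AddAut X) : Prop :=
  a.1 ∈ D.Yplus ∧ b.1 ∈ D.Yplus ∧ a.2 ∈ D.Wg ∧ b.2 ∈ D.Wg ∧
    ∃ g ∈ D.PhiPos, ∃ m : ℤ,
      D.affAct a (aroot (X := X) g m) ∈ D.PhiAffPos ∧ b = D.mulA a (D.saff g m)

/-- The (strict) affine Bruhat order on `W⁺`. -/
def alt : (Y × AddAut X) → (Y × AddAut X) → Prop := Relation.TransGen D.astep

/-- The affine Bruhat order on `W⁺`. -/
def ale (a b : Y × AddAut X) : Prop := a = b ∨ D.alt a b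

/-- `b` covers `a` for the affine Bruhat order: `a < b` and nothing lies strictly
between them. -/
def acovers (a b : Y × AddAut X) : Prop :=
  D.alt a b ∧ ∀ c, D.alt a c → D.alt c b → False

/-- `Λ` is a family of fundamental weights: `⟨αv i, Λ j⟩ = δ_{ij}`. -/
def IsFundWeights (Λ : I → X) : Prop :=
  ∀ i j, D.pr (D.αv i) (Λ j) = if i = j then 1 else 0

/-- The height `ht(λ) = ⟨λ, ρ⟩` where `ρ = Σ_i Λ_i`. -/
def ht (Λ : I → X) (l : Y) : ℤ := D.pr l (∑ i, Λ i)

/-- The affine length `ℓᵃ` with integral values. -/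
noncomputable def alen (Λ : I → X) (a : Y × AddAut X) : ℤ :=
  2 * D.ht Λ (D.dompp a.1) +
    ((({x | x ∈ D.invSet a.2⁻¹ ∧ 0 ≤ D.pr a.1 x}).ncard : ℤ) -
      (({x | x ∈ D.invSet a.2⁻¹ ∧ D.pr a.1 x < 0}).ncard : ℤ))

end KM


/-!
Put `s = s_i` and `a = α_i`. The hypothesis `ℓ(sv) > ℓ(v)` forces `v⁻¹ a > 0`, so `a ∉ Inv(v⁻¹)`
while `a ∈ Inv(v⁻¹ s)`. Since `s` permutes `Φ₊ ∖ {a}`, it maps `Inv(u) ∖ {a}` onto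
`Inv(u s) ∖ {a}` for every `u`, and `a` lies in exactly one of `Inv(w⁻¹)`, `Inv(w⁻¹ s)`. Transported
by `s`, the two counts defining `ℓ_{sv}(w)` and `ℓ_v(sw)` agree away from `a`, and `a` contributes
`-1` to the first when `a ∈ Inv(w⁻¹)` and `+1` to the second otherwise.

Every real root is positive or negative because `w(α_j) ≥ 0` whenever the word length satisfies
`ℓ(w s_j) ≥ ℓ(w)`; by induction on `ℓ(w)` this reduces to the rank-two subgroup `⟨s_j, s_k⟩`. There an element without descent at `s_j` is an alternating word ending in
`s_k`, whose coefficients on `α_j, α_k` stay nonnegative: forever if `a_jk a_kj ≥ 4`, and, if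
`a_jk a_kj < 4`, as long as the word is shorter than the braid length `m ∈ {2, 3, 4, 6}`, which
a word without descent always is.
-/

section WordLength

variable {G γ : Type*} [Group G] (g : γ → G)

/-- Word length with respect to the family `g`; it is `0` outside the submonoid generated by `g`. -/
noncomputable def wordLength (x : G) : ℕ :=
  sInf {n | ∃ l : List γ, (l.map g).prod = x ∧ l.length = n}

variable {g} {x y : G}

lemma wordLength_le (l : List γ) : wordLength g (l.map g).prod ≤ l.length :=
  Nat.sInf_le ⟨l, rfl, rfl⟩

@[simp] lemma wordLength_one : wordLength g (1 : G) = 0 :=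
  Nat.le_zero.mp (wordLength_le (g := g) [])

lemma wordLength_apply_le (c : γ) : wordLength g (g c) ≤ 1 := by
  simpa using wordLength_le (g := g) [c]

lemma list_map_prod_mem_closure (l : List γ) :
    (l.map g).prod ∈ Submonoid.closure (Set.range g) :=
  list_prod_mem fun _ hz => by
    obtain ⟨c, -, rfl⟩ := List.mem_map.mp hz
    exact Submonoid.subset_closure ⟨c, rfl⟩

lemma exists_list_map_prod_eq (hx : x ∈ Submonoid.closure (Set.range g)) :
    ∃ l : List γ, (l.map g).prod = x := by
  induction hx using Submonoid.closure_induction with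
  | mem x hx => obtain ⟨c, rfl⟩ := hx; exact ⟨[c], by simp⟩
  | one => exact ⟨[], rfl⟩
  | mul x y _ _ hx hy =>
    obtain ⟨⟨l, rfl⟩, l', rfl⟩ := And.intro hx hy
    exact ⟨l ++ l', by simp⟩

lemma exists_list_length_eq_wordLength (hx : x ∈ Submonoid.closure (Set.range g)) :
    ∃ l : List γ, (l.map g).prod = x ∧ l.length = wordLength g x := by
  obtain ⟨l, hl⟩ := exists_list_map_prod_eq hx
  exact Nat.sInf_mem (s := {n | ∃ l : List γ, (l.map g).prod = x ∧ l.length = n})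
    ⟨l.length, l, hl, rfl⟩

lemma eq_one_of_wordLength_eq_zero (hx : x ∈ Submonoid.closure (Set.range g))
    (h : wordLength g x = 0) : x = 1 := by
  obtain ⟨l, rfl, hl⟩ := exists_list_length_eq_wordLength hx
  simp [List.eq_nil_of_length_eq_zero (hl.trans h)]

lemma wordLength_mul_le (hx : x ∈ Submonoid.closure (Set.range g))
    (hy : y ∈ Submonoid.closure (Set.range g)) :
    wordLength g (x * y) ≤ wordLength g x + wordLength g y := by
  obtain ⟨l, rfl, hl⟩ := exists_list_length_eq_wordLength hx
  obtain ⟨l', rfl, hl'⟩ := exists_list_length_eq_wordLength hy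
  simpa [← hl, ← hl'] using wordLength_le (g := g) (l ++ l')

lemma wordLength_mul_apply_le (hx : x ∈ Submonoid.closure (Set.range g)) (c : γ) :
    wordLength g (x * g c) ≤ wordLength g x + 1 :=
  (wordLength_mul_le hx (Submonoid.subset_closure ⟨c, rfl⟩)).trans
    (Nat.add_le_add_left (wordLength_apply_le c) _)

lemma exists_eq_mul_of_wordLength_eq_succ (hx : x ∈ Submonoid.closure (Set.range g)) {n : ℕ}
    (hn : wordLength g x = n + 1) :
    ∃ x' c, x' ∈ Submonoid.closure (Set.range g) ∧ wordLength g x' = n ∧ x = x' * g c := by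
  obtain ⟨l, rfl, hl⟩ := exists_list_length_eq_wordLength hx
  obtain rfl | ⟨l', c, rfl⟩ := List.eq_nil_or_concat l
  · simp at hn
  have hprod : ((l'.concat c).map g).prod = (l'.map g).prod * g c := by simp
  have h₁ := wordLength_le (g := g) l'
  have h₂ := wordLength_mul_apply_le (list_map_prod_mem_closure (g := g) l') c
  simp only [List.length_concat] at hl
  rw [← hprod] at h₂
  exact ⟨_, c, list_map_prod_mem_closure l', by omega, hprod⟩

lemma wordLength_le_comp {β : Type*} (e : β → γ)
    (hx : x ∈ Submonoid.closure (Set.range (g ∘ e))) :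
    wordLength g x ≤ wordLength (g ∘ e) x := by
  obtain ⟨l, rfl, hl⟩ := exists_list_length_eq_wordLength hx
  simpa [← hl] using wordLength_le (g := g) (l.map e)

lemma exists_mul_eq_of_wordLength_add_le {β : Type*} {e : β → γ}
    (hinv : ∀ b, g (e b) * g (e b) = 1) (hx : x ∈ Submonoid.closure (Set.range g))
    (hy : y ∈ Submonoid.closure (Set.range (g ∘ e)))
    (hxy : wordLength g x + wordLength (g ∘ e) y ≤ wordLength g (x * y)) :
    ∃ x' y', x' ∈ Submonoid.closure (Set.range g) ∧
      y' ∈ Submonoid.closure (Set.range (g ∘ e)) ∧ x' * y' = x * y ∧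
      wordLength g x' ≤ wordLength g x ∧
      wordLength g x' + wordLength (g ∘ e) y' ≤ wordLength g (x * y) ∧
      ∀ b, wordLength g x' ≤ wordLength g (x' * g (e b)) := by
  induction hn : wordLength g x using Nat.strong_induction_on generalizing x y with
  | _ n ih =>
  by_cases hasc : ∀ b, wordLength g x ≤ wordLength g (x * g (e b))
  · exact ⟨x, y, hx, hy, rfl, hn.le, hxy, hasc⟩
  simp only [not_forall, not_le] at hasc
  obtain ⟨b, hb⟩ := hasc
  have hgen' : g (e b) ∈ Submonoid.closure (Set.range (g ∘ e)) :=
    Submonoid.subset_closure ⟨b, rfl⟩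
  have hprod : x * g (e b) * (g (e b) * y) = x * y := by
    rw [mul_assoc, ← mul_assoc (g (e b)), hinv, one_mul]
  have hy' : wordLength (g ∘ e) (g (e b) * y) ≤ 1 + wordLength (g ∘ e) y :=
    (wordLength_mul_le hgen' hy).trans (Nat.add_le_add_right (wordLength_apply_le (g := g ∘ e) b) _)
  obtain ⟨x', y', hx', hy'', hprod', hle, hadd, hasc⟩ :=
    ih _ (hn ▸ hb) (Submonoid.mul_mem _ hx (Submonoid.subset_closure ⟨e b, rfl⟩))
      (Submonoid.mul_mem _ hgen' hy) (by rw [hprod]; omega) rfl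
  exact ⟨x', y', hx', hy'', hprod'.trans hprod, by omega, hprod ▸ hadd, hasc⟩

end WordLength

section Dihedral

variable {G : Type*} [Group G] (g : Bool → G)

/-- The alternating product `⋯ g (!b) * g b` of `r` factors, whose rightmost factor is `g b`. -/
def altProd (b : Bool) : ℕ → G
  | 0 => 1
  | r + 1 => g (xor b r.bodd) * altProd b r

variable {g}

lemma altProd_succ' (b : Bool) (r : ℕ) : altProd g b (r + 1) = altProd g (!b) r * g b := by
  induction r generalizing b with
  | zero => simp [altProd]
  | succ r ih =>
    rw [altProd, ih, altProd, Nat.bodd_succ, ← mul_assoc, Bool.xor_not, Bool.not_xor]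

lemma exists_altProd_eq_mul (b : Bool) {m n : ℕ} (hmn : m ≤ n) :
    ∃ z ∈ Submonoid.closure (Set.range g), wordLength g z ≤ n - m ∧
      altProd g b n = z * altProd g b m := by
  induction n, hmn using Nat.le_induction with
  | base => exact ⟨1, Submonoid.one_mem _, by simp, (one_mul _).symm⟩
  | succ n hmn ih =>
    obtain ⟨z, hz, hzlen, hzeq⟩ := ih
    have hgen : g (xor b n.bodd) ∈ Submonoid.closure (Set.range g) :=
      Submonoid.subset_closure ⟨_, rfl⟩
    refine ⟨g (xor b n.bodd) * z, Submonoid.mul_mem _ hgen hz, ?_,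
      by rw [altProd, hzeq, mul_assoc]⟩
    have := (wordLength_mul_le hgen hz).trans
      (Nat.add_le_add_right (wordLength_apply_le (g := g) (xor b n.bodd)) _)
    omega

lemma altProd_mem_closure (b : Bool) (n : ℕ) :
    altProd g b n ∈ Submonoid.closure (Set.range g) := by
  obtain ⟨z, hz, -, hzeq⟩ := exists_altProd_eq_mul (g := g) b (Nat.zero_le n)
  simpa [hzeq, altProd] using hz

lemma wordLength_altProd_le (b : Bool) (n : ℕ) : wordLength g (altProd g b n) ≤ n := by
  obtain ⟨z, -, hzlen, hzeq⟩ := exists_altProd_eq_mul (g := g) b (Nat.zero_le n)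
  simpa [hzeq, altProd] using hzlen

lemma eq_altProd_of_wordLength_le (hinv : ∀ b, g b * g b = 1) {x : G} {b : Bool}
    (hx : x ∈ Submonoid.closure (Set.range g)) (hasc : wordLength g x ≤ wordLength g (x * g b)) :
    x = altProd g (!b) (wordLength g x) := by
  induction hn : wordLength g x generalizing x b with
  | zero => exact eq_one_of_wordLength_eq_zero hx hn
  | succ n ih =>
    obtain ⟨x', c, hx', hx'len, rfl⟩ := exists_eq_mul_of_wordLength_eq_succ hx hn
    obtain rfl : c = !b := by
      refine (Bool.eq_or_eq_not c b).resolve_left fun hcb => ?_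
      subst hcb
      rw [mul_assoc, hinv, mul_one] at hasc
      omega
    rw [ih hx' (b := !b) (by omega) hx'len, altProd_succ', Bool.not_not]

lemma wordLength_lt_of_braid (hinv : ∀ b, g b * g b = 1) {x : G} {b : Bool} {m : ℕ}
    (hm : 0 < m) (hbraid : altProd g (!b) m * g b = altProd g (!b) (m - 1))
    (hx : x ∈ Submonoid.closure (Set.range g)) (hasc : wordLength g x ≤ wordLength g (x * g b)) :
    wordLength g x < m := by
  by_contra! hmn
  obtain ⟨z, hz, hzlen, hzeq⟩ := exists_altProd_eq_mul (g := g) (!b) hmn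
  have hx' := eq_altProd_of_wordLength_le hinv hx hasc
  have : x * g b = z * altProd g (!b) (m - 1) := by
    rw [← hbraid, ← mul_assoc, ← hzeq, ← hx']
  rw [this] at hasc
  have := (wordLength_mul_le hz (altProd_mem_closure _ _)).trans
    (Nat.add_le_add_left (wordLength_altProd_le (g := g) (!b) (m - 1)) _)
  omega

end Dihedral

section SignedCount

variable {α : Type*}

noncomputable def signedCount (S T : Set α) : ℤ := (S \ T).ncard - (S ∩ T).ncard

lemma signedCount_image {f : α → α} (hf : f.Injective) (S T : Set α) :
    signedCount (f '' S) (f '' T) = signedCount S T := by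
  rw [signedCount, ← Set.image_sdiff hf, ← Set.image_inter hf, Set.ncard_image_of_injective _ hf,
    Set.ncard_image_of_injective _ hf, signedCount]

lemma signedCount_sdiff_singleton_right {S : Set α} (T : Set α) {a : α} (ha : a ∉ S) :
    signedCount S (T \ {a}) = signedCount S T := by
  have hsdiff : S \ (T \ {a}) = S \ T := by ext x; by_cases hx : x = a <;> simp [hx, ha]
  have hinter : S ∩ (T \ {a}) = S ∩ T := by ext x; by_cases hx : x = a <;> simp [hx, ha]
  rw [signedCount, hsdiff, hinter, signedCount]

lemma signedCount_eq_sdiff_singleton_sub {S T : Set α} (hS : S.Finite) {a : α} (ha : a ∈ S)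
    (haT : a ∈ T) : signedCount S T = signedCount (S \ {a}) T - 1 := by
  have := Set.ncard_sdiff_singleton_add_one (show a ∈ S ∩ T from ⟨ha, haT⟩) (hS.inter_of_left T)
  rw [signedCount, signedCount, Set.sdiff_inter_right_comm, sdiff_right_comm,
    Set.sdiff_singleton_eq_self (s := S \ T) fun h => h.2 haT]
  omega

lemma signedCount_eq_sdiff_singleton_add {S T : Set α} (hS : S.Finite) {a : α} (ha : a ∈ S)
    (haT : a ∉ T) : signedCount S T = signedCount (S \ {a}) T + 1 := by
  have := Set.ncard_sdiff_singleton_add_one (show a ∈ S \ T from ⟨ha, haT⟩) hS.sdiff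
  rw [signedCount, signedCount, Set.sdiff_inter_right_comm, sdiff_right_comm,
    Set.sdiff_singleton_eq_self (s := S ∩ T) fun h => haT h.2]
  omega

end SignedCount

/-- Coefficients on `α_j, α_k` of `⋯ s_j s_k (α_j)` (`r` alternating reflections), where
`a = A j k` and `b = A k j`. -/
def rank2Coeff (a b : ℤ) : ℕ → ℤ × ℤ
  | 0 => (1, 0)
  | r + 1 =>
    let c := rank2Coeff a b r
    if r.bodd then (-c.1 - a * c.2, c.2) else (c.1, -b * c.1 - c.2)

/-- For `a * b ≥ 4`, the coefficient changed by the next reflection at least doubles. -/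
lemma rank2Coeff_nonneg_and_growth {a b : ℤ} (ha : a ≤ 0) (hb : b ≤ 0) (h4 : 4 ≤ a * b)
    (r : ℕ) :
    0 ≤ (rank2Coeff a b r).1 ∧ 0 ≤ (rank2Coeff a b r).2 ∧
      if r.bodd then 2 * (rank2Coeff a b r).1 ≤ -a * (rank2Coeff a b r).2
      else 2 * (rank2Coeff a b r).2 ≤ -b * (rank2Coeff a b r).1 := by
  induction r with
  | zero => simp only [rank2Coeff, Nat.bodd_zero, Bool.false_eq_true, if_false]; omega
  | succ r ih =>
    simp only [rank2Coeff, Nat.bodd_succ]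
    generalize rank2Coeff a b r = c at ih ⊢
    obtain ⟨p, q⟩ := c
    cases hr : r.bodd <;> simp only [hr, Bool.false_eq_true, if_false, if_true, Bool.not_false,
      Bool.not_true] at ih ⊢ <;> obtain ⟨hp, hq, hgrow⟩ := ih
    · refine ⟨hp, by linarith, ?_⟩
      nlinarith [mul_nonneg (neg_nonneg.mpr ha) (show 0 ≤ -b * p - 2 * q by linarith),
        mul_nonneg hp (show 0 ≤ a * b - 4 by linarith)]
    · refine ⟨by linarith, hq, ?_⟩
      nlinarith [mul_nonneg (neg_nonneg.mpr hb) (show 0 ≤ -a * q - 2 * p by linarith),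
        mul_nonneg hq (show 0 ≤ a * b - 4 by linarith)]

lemma cartan_pair_eq_of_mul_lt_four {a b : ℤ} (ha : a ≤ 0) (hb : b ≤ 0) (hab : a = 0 ↔ b = 0)
    (h4 : a * b < 4) :
    a = 0 ∧ b = 0 ∨ a = -1 ∧ b = -1 ∨ a = -1 ∧ b = -2 ∨ a = -2 ∧ b = -1 ∨
      a = -1 ∧ b = -3 ∨ a = -3 ∧ b = -1 := by
  have : -3 ≤ a := by
    by_contra!
    nlinarith [show b ≤ -1 by omega]
  have : -3 ≤ b := by
    by_contra!
    nlinarith [show a ≤ -1 by omega]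
  interval_cases a <;> interval_cases b <;> omega

/-- The order `m` of `s_j s_k` when `A j k * A k j = c < 4`, i.e. `c = 4 cos² (π / m)`. -/
def braidLength (c : ℤ) : ℕ := if c = 0 then 2 else if c = 1 then 3 else if c = 2 then 4 else 6

lemma braidLength_pos (c : ℤ) : 0 < braidLength c := by
  unfold braidLength; split_ifs <;> norm_num

lemma AddAut.mul_apply' {A : Type*} [Add A] (f g : AddAut A) (x : A) : (f * g) x = f (g x) :=
  rfl

namespace KM

variable {I X Y : Type*} [Fintype I] [AddCommGroup X] [AddCommGroup Y] (D : KM I X Y)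

lemma sX_apply (i : I) (x : X) : D.sX i x = x - D.pairE (D.αv i) x • D.α i := rfl

lemma sX_sX (i : I) (x : X) : D.sX i (D.sX i x) = x := D.sX_invol i x

lemma sX_alpha (i j : I) : D.sX i (D.α j) = D.α j - D.A i j • D.α i := by
  rw [sX_apply, pair_av_a]

lemma sX_alpha_self (i : I) : D.sX i (D.α i) = -D.α i := by
  rw [sX_alpha, A_diag]
  module

lemma sX_mul_self (i : I) : D.sX i * D.sX i = 1 := AddEquiv.ext (D.sX_invol i)

lemma sX_inv (i : I) : (D.sX i)⁻¹ = D.sX i := inv_eq_of_mul_eq_one_right (D.sX_mul_self i)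

lemma sX_mem_Wg (i : I) : D.sX i ∈ D.Wg := Subgroup.subset_closure ⟨i, rfl⟩

lemma mem_Wg_iff {w : AddAut X} : w ∈ D.Wg ↔ w ∈ Submonoid.closure (Set.range D.sX) := by
  have hinv : (Set.range D.sX)⁻¹ = Set.range D.sX := by
    ext w
    simp [Set.mem_inv, inv_eq_iff_eq_inv, D.sX_inv, eq_comm]
  rw [Wg, ← Subgroup.mem_toSubmonoid, Subgroup.closure_toSubmonoid, hinv, Set.union_self]

lemma altProd_apply_alpha (j k : I) (r : ℕ) :
    altProd (D.sX ∘ (cond · j k)) false r (D.α j) =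
      (rank2Coeff (D.A j k) (D.A k j) r).1 • D.α j +
        (rank2Coeff (D.A j k) (D.A k j) r).2 • D.α k := by
  induction r with
  | zero => simp only [altProd, rank2Coeff, one_smul, zero_smul, add_zero]; rfl
  | succ r ih =>
    rw [altProd, AddAut.mul_apply', ih, rank2Coeff]
    cases r.bodd <;>
      simp only [bne_self_eq_false, Bool.bne_true, Bool.not_false, Function.comp_apply, cond_false,
        cond_true, Bool.false_eq_true, if_true, if_false, map_add, map_zsmul, sX_alpha, A_diag] <;>
      module

def posCone : AddSubmonoid X := AddSubmonoid.closure (Set.range D.α)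

lemma alpha_mem_posCone (i : I) : D.α i ∈ D.posCone := AddSubmonoid.subset_closure ⟨i, rfl⟩

lemma alpha_mem_Phi (i : I) : D.α i ∈ D.Phi := ⟨(1, i), D.Wg.one_mem, rfl⟩

variable {D}

lemma braid_and_rank2Coeff_nonneg_of_mul_lt_four {j k : I} (hjk : j ≠ k)
    (h4 : D.A j k * D.A k j < 4) :
    altProd (D.sX ∘ (cond · j k)) false (braidLength (D.A j k * D.A k j)) * D.sX j =
        altProd (D.sX ∘ (cond · j k)) false (braidLength (D.A j k * D.A k j) - 1) ∧
      ∀ r < braidLength (D.A j k * D.A k j),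
        0 ≤ (rank2Coeff (D.A j k) (D.A k j) r).1 ∧ 0 ≤ (rank2Coeff (D.A j k) (D.A k j) r).2 := by
  rcases cartan_pair_eq_of_mul_lt_four (D.A_offdiag j k hjk) (D.A_offdiag k j hjk.symm)
      ⟨D.A_zero_iff j k, D.A_zero_iff k j⟩ h4 with
    ⟨ha, hb⟩ | ⟨ha, hb⟩ | ⟨ha, hb⟩ | ⟨ha, hb⟩ | ⟨ha, hb⟩ | ⟨ha, hb⟩ <;>
  · rw [ha, hb]
    refine ⟨?_, by decide⟩
    ext x
    simp only [braidLength, Int.reduceMul, Int.reduceNeg, Int.reduceEq, if_true, if_false,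
      altProd, mul_one, Nat.bodd_succ, Nat.bodd_zero, Bool.not_false, Bool.not_true, Bool.bne_true,
      bne_self_eq_false, Function.comp_apply, cond_true, cond_false, AddAut.mul_apply', sX_apply,
      map_sub, map_zsmul, D.pair_av_a, D.A_diag, ha, hb]
    module

lemma mem_posCone_iff {x : X} : x ∈ D.posCone ↔ ∃ c : I → ℕ, x = ∑ i, (c i : ℤ) • D.α i := by
  simp [posCone, AddSubmonoid.mem_closure_range_iff_of_fintype, natCast_zsmul]

lemma mem_PhiPos_iff {x : X} : x ∈ D.PhiPos ↔ x ∈ D.Phi ∧ x ∈ D.posCone := by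
  rw [mem_posCone_iff]; rfl

lemma alpha_mem_PhiPos (i : I) : D.α i ∈ D.PhiPos :=
  mem_PhiPos_iff.mpr ⟨D.alpha_mem_Phi i, D.alpha_mem_posCone i⟩

lemma apply_mem_Phi {w : AddAut X} (hw : w ∈ D.Wg) {x : X} (hx : x ∈ D.Phi) : w x ∈ D.Phi := by
  obtain ⟨⟨u, j⟩, hu, rfl⟩ := hx
  exact ⟨(w * u, j), D.Wg.mul_mem hw hu, rfl⟩

lemma eq_zero_of_mem_posCone_of_neg_mem {x : X} (hx : x ∈ D.posCone) (hx' : -x ∈ D.posCone) :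
    x = 0 := by
  obtain ⟨c, rfl⟩ := mem_posCone_iff.mp hx
  obtain ⟨d, hd⟩ := mem_posCone_iff.mp hx'
  have hcd := Fintype.linearIndependent_iffₛ.mp D.indep_α (fun i => (c i + d i : ℤ)) 0 (by
    simp only [add_smul, Finset.sum_add_distrib, ← hd, add_neg_cancel, Pi.zero_apply,
      zero_smul, Finset.sum_const_zero])
  have hc : ∀ i, (c i : ℤ) = 0 := fun i => by
    have := hcd i
    simp only [Pi.zero_apply] at this
    omega
  simp [hc]

lemma notMem_PhiNeg_of_mem_PhiPos {x : X} (hx : x ∈ D.PhiPos) : x ∉ D.PhiNeg := by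
  intro hx'
  obtain ⟨⟨u, j⟩, -, hu⟩ := (mem_PhiPos_iff.mp hx).1
  have h0 : x = 0 :=
    eq_zero_of_mem_posCone_of_neg_mem (mem_PhiPos_iff.mp hx).2 (mem_PhiPos_iff.mp hx').2
  exact D.indep_α.ne_zero j (u.injective (by simpa [h0] using hu.symm))

lemma neg_alpha_notMem_PhiPos (i : I) : -D.α i ∉ D.PhiPos :=
  notMem_PhiNeg_of_mem_PhiPos (D.alpha_mem_PhiPos i)

lemma apply_alpha_mem_closure_pair {j k : I} (hjk : j ≠ k) {y : AddAut X}
    (hy : y ∈ Submonoid.closure (Set.range (D.sX ∘ (cond · j k))))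
    (hasc : wordLength (D.sX ∘ (cond · j k)) y ≤
      wordLength (D.sX ∘ (cond · j k)) (y * D.sX j)) :
    y (D.α j) ∈ AddSubmonoid.closure {D.α j, D.α k} := by
  have hinv : ∀ b, (D.sX ∘ (cond · j k)) b * (D.sX ∘ (cond · j k)) b = 1 :=
    fun b => D.sX_mul_self _
  obtain ⟨hp, hq⟩ :
      0 ≤ (rank2Coeff (D.A j k) (D.A k j) (wordLength (D.sX ∘ (cond · j k)) y)).1 ∧
      0 ≤ (rank2Coeff (D.A j k) (D.A k j) (wordLength (D.sX ∘ (cond · j k)) y)).2 := by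
    rcases le_or_gt 4 (D.A j k * D.A k j) with h4 | h4
    · exact (rank2Coeff_nonneg_and_growth (D.A_offdiag j k hjk) (D.A_offdiag k j hjk.symm) h4
        _).imp_right And.left
    · obtain ⟨hbraid, hcoeff⟩ := braid_and_rank2Coeff_nonneg_of_mul_lt_four hjk h4
      exact hcoeff _ (wordLength_lt_of_braid (b := true) hinv (braidLength_pos _) hbraid hy hasc)
  rw [eq_altProd_of_wordLength_le (b := true) hinv hy hasc, Bool.not_true, altProd_apply_alpha]
  lift (rank2Coeff (D.A j k) (D.A k j) (wordLength (D.sX ∘ (cond · j k)) y)).1 to ℕ using hp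
    with p
  lift (rank2Coeff (D.A j k) (D.A k j) (wordLength (D.sX ∘ (cond · j k)) y)).2 to ℕ using hq
    with q
  simp only [natCast_zsmul]
  exact add_mem (nsmul_mem (AddSubmonoid.subset_closure (by simp)) p)
    (nsmul_mem (AddSubmonoid.subset_closure (by simp)) q)

/-- Reduction to rank two: write `w = x * y` with `y ∈ ⟨s_j, s_k⟩` (`s_k` the last letter of a
reduced word for `w`), lengths adding up and `x` without descent at `s_j, s_k`; by induction
`x α_j, x α_k ≥ 0`, and `y α_j ∈ ℕ α_j + ℕ α_k`. -/
lemma apply_alpha_mem_posCone_of_wordLength_le {w : AddAut X}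
    (hw : w ∈ Submonoid.closure (Set.range D.sX)) {j : I}
    (hasc : wordLength D.sX w ≤ wordLength D.sX (w * D.sX j)) :
    w (D.α j) ∈ D.posCone := by
  induction hn : wordLength D.sX w using Nat.strong_induction_on generalizing w j with
  | _ n ih =>
  rcases n with _ | n
  · rw [eq_one_of_wordLength_eq_zero hw hn]
    exact D.alpha_mem_posCone j
  obtain ⟨w', k, hw', hw'len, rfl⟩ := exists_eq_mul_of_wordLength_eq_succ hw hn
  have hjk : j ≠ k := by
    rintro rfl
    rw [mul_assoc, D.sX_mul_self, mul_one] at hasc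
    omega
  obtain ⟨x, y, hx, hy, hxy, hxlen, hadd, hxasc⟩ :=
    exists_mul_eq_of_wordLength_add_le (e := (cond · j k)) (fun _ => D.sX_mul_self _) hw'
      (Submonoid.subset_closure ⟨false, rfl⟩) (by
        have := wordLength_apply_le (g := D.sX ∘ (cond · j k)) false
        simp only [Function.comp_apply, cond_false] at this ⊢
        omega)
  simp only [Function.comp_apply, cond_false] at hxy hadd
  have hyasc : wordLength (D.sX ∘ (cond · j k)) y ≤
      wordLength (D.sX ∘ (cond · j k)) (y * D.sX j) := by
    have hyj := Submonoid.mul_mem _ hy (Submonoid.subset_closure ⟨true, rfl⟩)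
    have := (wordLength_mul_le hx
      (Submonoid.closure_mono (Set.range_comp_subset_range _ _) hyj)).trans
        (Nat.add_le_add_left (wordLength_le_comp _ hyj) _)
    rw [← mul_assoc, hxy] at this
    simp only [Function.comp_apply, cond_true] at this
    omega
  have hle : AddSubmonoid.closure {D.α j, D.α k} ≤ D.posCone.comap x.toAddMonoidHom :=
    AddSubmonoid.closure_le.mpr (by
      rintro _ (rfl | rfl)
      exacts [ih _ (by omega) hx (hxasc true) rfl, ih _ (by omega) hx (hxasc false) rfl])
  rw [← hxy, AddAut.mul_apply']
  exact hle (apply_alpha_mem_closure_pair hjk hy hyasc)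

lemma mem_PhiPos_or_mem_PhiNeg {x : X} (hx : x ∈ D.Phi) : x ∈ D.PhiPos ∨ x ∈ D.PhiNeg := by
  obtain ⟨⟨w, j⟩, hw, rfl⟩ := hx
  have hw' := D.mem_Wg_iff.mp hw
  rcases le_or_gt (wordLength D.sX w) (wordLength D.sX (w * D.sX j)) with hasc | hdesc
  · exact Or.inl (mem_PhiPos_iff.mpr
      ⟨⟨(w, j), hw, rfl⟩, apply_alpha_mem_posCone_of_wordLength_le hw' hasc⟩)
  · have hneg : (w * D.sX j) (D.α j) = -w (D.α j) := by
      rw [AddAut.mul_apply', sX_alpha_self, map_neg]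
    refine Or.inr (mem_PhiPos_iff.mpr
      ⟨hneg ▸ ⟨(w * D.sX j, j), D.Wg.mul_mem hw (D.sX_mem_Wg j), rfl⟩,
        hneg ▸ apply_alpha_mem_posCone_of_wordLength_le
          (Submonoid.mul_mem _ hw' (Submonoid.subset_closure ⟨j, rfl⟩)) ?_⟩)
    rw [mul_assoc, D.sX_mul_self, mul_one]
    exact hdesc.le

lemma exists_eq_zsmul_alpha_of_add_eq {x y : X} (hx : x ∈ D.posCone) (hy : y ∈ D.posCone)
    {i : I} {n : ℤ} (h : x + y = n • D.α i) : ∃ c : ℤ, x = c • D.α i := by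
  classical
  obtain ⟨c, rfl⟩ := mem_posCone_iff.mp hx
  obtain ⟨d, rfl⟩ := mem_posCone_iff.mp hy
  have hcd := Fintype.linearIndependent_iffₛ.mp D.indep_α (fun m => (c m + d m : ℤ))
    (Pi.single i n) (by simpa [add_smul, Finset.sum_add_distrib, Pi.single_apply] using h)
  refine ⟨c i, Finset.sum_eq_single i (fun m _ hm => ?_) (by simp)⟩
  have := hcd m
  simp only [Pi.single_apply, hm, if_false] at this
  simp [show (c m : ℤ) = 0 by omega]

lemma isUnit_of_alpha_eq_zsmul {γ : X} (hγ : γ ∈ D.posCone) {l : I} {c : ℤ}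
    (h : D.α l = c • γ) : IsUnit c := by
  classical
  obtain ⟨d, rfl⟩ := mem_posCone_iff.mp hγ
  have hcd := Fintype.linearIndependent_iffₛ.mp D.indep_α (Pi.single l 1) (fun m => c * d m)
    (by simp only [Pi.single_apply, ite_smul, one_smul, zero_smul, Finset.sum_ite_eq',
      Finset.mem_univ, if_true, h, Finset.smul_sum, smul_smul]) l
  simp only [Pi.single_eq_same] at hcd
  exact IsUnit.of_mul_eq_one _ hcd.symm

lemma eq_alpha_of_mem_PhiPos_of_eq_zsmul {β : X} (hβ : β ∈ D.PhiPos) {i : I} {c : ℤ}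
    (hc : β = c • D.α i) : β = D.α i := by
  obtain ⟨⟨u, l⟩, hu, hβu⟩ := (mem_PhiPos_iff.mp hβ).1
  have hl : D.α l = c • u⁻¹ (D.α i) := by
    rw [← map_zsmul, ← hc, hβu]; exact (u.symm_apply_apply _).symm
  have hunit : IsUnit c := by
    rcases mem_PhiPos_or_mem_PhiNeg (apply_mem_Phi (D.Wg.inv_mem hu) (D.alpha_mem_Phi i)) with
      hpos | hneg
    · exact isUnit_of_alpha_eq_zsmul (mem_PhiPos_iff.mp hpos).2 hl
    · simpa using (isUnit_of_alpha_eq_zsmul (c := -c) (mem_PhiPos_iff.mp hneg).2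
        (by rw [hl, neg_smul_neg])).neg
  rcases Int.isUnit_iff.mp hunit with rfl | rfl
  · rw [hc, one_smul]
  · rw [hc, neg_one_zsmul] at hβ
    exact (neg_alpha_notMem_PhiPos i hβ).elim

lemma sX_apply_mem_PhiPos {β : X} (hβ : β ∈ D.PhiPos) {i : I} (hne : β ≠ D.α i) :
    D.sX i β ∈ D.PhiPos := by
  refine (mem_PhiPos_or_mem_PhiNeg
    (apply_mem_Phi (D.sX_mem_Wg i) (mem_PhiPos_iff.mp hβ).1)).resolve_right fun hneg => hne ?_
  obtain ⟨c, hc⟩ := exists_eq_zsmul_alpha_of_add_eq (n := D.pairE (D.αv i) β)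
    (mem_PhiPos_iff.mp hβ).2 (mem_PhiPos_iff.mp hneg).2 (by rw [sX_apply]; abel)
  exact eq_alpha_of_mem_PhiPos_of_eq_zsmul hβ hc

lemma image_sX_invSet_sdiff (u : AddAut X) (i : I) :
    D.sX i '' (D.invSet u \ {D.α i}) = D.invSet (u * D.sX i) \ {D.α i} := by
  have hsα : ∀ {β}, D.sX i β = D.α i → β = -D.α i := fun {β} h => by
    rw [← D.sX_sX i β, h, sX_alpha_self]
  ext γ
  constructor
  · rintro ⟨β, ⟨⟨hβ, huβ⟩, hne⟩, rfl⟩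
    refine ⟨⟨sX_apply_mem_PhiPos hβ hne, by rwa [AddAut.mul_apply', sX_sX]⟩, fun h => ?_⟩
    exact neg_alpha_notMem_PhiPos i (hsα h ▸ hβ)
  · rintro ⟨⟨hγ, huγ⟩, hne⟩
    refine ⟨D.sX i γ, ⟨⟨sX_apply_mem_PhiPos hγ hne, huγ⟩, fun h => ?_⟩, D.sX_sX i γ⟩
    exact neg_alpha_notMem_PhiPos i (hsα h ▸ hγ)

lemma alpha_mem_invSet_mul_sX_iff (u : AddAut X) (i : I) :
    D.α i ∈ D.invSet (u * D.sX i) ↔ u (D.α i) ∈ D.PhiPos := by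
  simp [invSet, PhiNeg, AddAut.mul_apply', sX_alpha_self, D.alpha_mem_PhiPos]

lemma alpha_mem_invSet_mul_sX_iff_notMem {u : AddAut X} (hu : u ∈ D.Wg) (i : I) :
    D.α i ∈ D.invSet (u * D.sX i) ↔ D.α i ∉ D.invSet u := by
  rw [alpha_mem_invSet_mul_sX_iff]
  rcases mem_PhiPos_or_mem_PhiNeg (apply_mem_Phi hu (D.alpha_mem_Phi i)) with h | h
  · exact ⟨fun _ hu => notMem_PhiNeg_of_mem_PhiPos h hu.2, fun _ => h⟩
  · exact ⟨fun hpos => (notMem_PhiNeg_of_mem_PhiPos hpos h).elim,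
      fun hu => (hu ⟨D.alpha_mem_PhiPos i, h⟩).elim⟩

lemma invSet_mul_subset (x : AddAut X) {y : AddAut X} (hy : y ∈ D.Wg) :
    D.invSet (x * y) ⊆ D.invSet y ∪ y ⁻¹' D.invSet x := by
  rintro β ⟨hβ, hxyβ⟩
  rcases mem_PhiPos_or_mem_PhiNeg (apply_mem_Phi hy (mem_PhiPos_iff.mp hβ).1) with hpos | hneg
  · exact Or.inr ⟨hpos, hxyβ⟩
  · exact Or.inl ⟨hβ, hneg⟩

lemma invSet_sX_subset (i : I) : D.invSet (D.sX i) ⊆ {D.α i} := by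
  rintro β ⟨hβ, hsβ⟩
  by_contra hne
  exact notMem_PhiNeg_of_mem_PhiPos (sX_apply_mem_PhiPos hβ hne) hsβ

lemma invSet_finite {w : AddAut X} (hw : w ∈ D.Wg) : (D.invSet w).Finite := by
  replace hw := D.mem_Wg_iff.mp hw
  induction hw using Submonoid.closure_induction with
  | mem _ hs =>
    obtain ⟨i, rfl⟩ := hs
    exact (Set.finite_singleton _).subset (invSet_sX_subset i)
  | one => exact Set.finite_empty.subset fun β hβ => notMem_PhiNeg_of_mem_PhiPos hβ.1 hβ.2
  | mul x y _ hy hx hy' =>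
    exact (hy'.union (hx.preimage y.injective.injOn)).subset
      (invSet_mul_subset x (D.mem_Wg_iff.mpr hy))

lemma invSet_sX_mul_subset {v : AddAut X} (hv : v ∈ D.Wg) {i : I}
    (hneg : v⁻¹ (D.α i) ∈ D.PhiNeg) :
    D.invSet (D.sX i * v) ⊆ D.invSet v \ {-v⁻¹ (D.α i)} := by
  rintro δ ⟨hδ, hsvδ⟩
  rw [AddAut.mul_apply'] at hsvδ
  have hvδ : v δ ∈ D.PhiNeg := by
    refine (mem_PhiPos_or_mem_PhiNeg (apply_mem_Phi hv (mem_PhiPos_iff.mp hδ).1)).resolve_left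
      fun hpos => ?_
    by_cases h : v δ = D.α i
    · have : δ = v⁻¹ (D.α i) := by rw [← h]; exact (v.symm_apply_apply δ).symm
      exact notMem_PhiNeg_of_mem_PhiPos hδ (this ▸ hneg)
    · exact notMem_PhiNeg_of_mem_PhiPos (sX_apply_mem_PhiPos hpos h) hsvδ
  refine ⟨⟨hδ, hvδ⟩, fun hδeq => ?_⟩
  have : v δ = -D.α i := by
    rw [Set.mem_singleton_iff.mp hδeq, map_neg]
    exact congrArg _ (v.apply_symm_apply _)
  rw [this, map_neg, sX_alpha_self, neg_neg] at hsvδ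
  exact notMem_PhiNeg_of_mem_PhiPos (D.alpha_mem_PhiPos i) hsvδ

lemma inv_apply_alpha_mem_PhiPos {v : AddAut X} (hv : v ∈ D.Wg) {i : I}
    (h : D.len v < D.len (D.sX i * v)) : v⁻¹ (D.α i) ∈ D.PhiPos := by
  refine (mem_PhiPos_or_mem_PhiNeg
    (apply_mem_Phi (D.Wg.inv_mem hv) (D.alpha_mem_Phi i))).resolve_right fun hneg => ?_
  have hmem : -v⁻¹ (D.α i) ∈ D.invSet v := by
    refine ⟨hneg, ?_⟩
    show -v (-v⁻¹ (D.α i)) ∈ D.PhiPos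
    rw [map_neg, neg_neg]
    exact (v.apply_symm_apply _).symm ▸ D.alpha_mem_PhiPos i
  have := (Set.ncard_le_ncard (invSet_sX_mul_subset hv hneg) (invSet_finite hv).sdiff).trans_lt
    (Set.ncard_sdiff_singleton_lt_of_mem hmem (invSet_finite hv))
  exact absurd h (not_lt.mpr this.le)

lemma rlen_eq_signedCount (v w : AddAut X) :
    D.rlen v w = signedCount (D.invSet w⁻¹) (D.invSet v⁻¹) := rfl

lemma rlen_sX_mul {v w : AddAut X} {i : I} (hv : v⁻¹ (D.α i) ∈ D.PhiPos) (hw : w ∈ D.Wg) :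
    D.rlen (D.sX i * v) w = D.rlen v (D.sX i * w) - 1 := by
  have hinv : ∀ u : AddAut X, (D.sX i * u)⁻¹ = u⁻¹ * D.sX i := fun u => by
    rw [mul_inv_rev, sX_inv]
  rw [rlen_eq_signedCount, rlen_eq_signedCount, hinv, hinv]
  have haB : D.α i ∉ D.invSet v⁻¹ := fun h => notMem_PhiNeg_of_mem_PhiPos hv h.2
  have haB' : D.α i ∈ D.invSet (v⁻¹ * D.sX i) := (alpha_mem_invSet_mul_sX_iff _ _).mpr hv
  have haA := alpha_mem_invSet_mul_sX_iff_notMem (D.Wg.inv_mem hw) i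
  have htransport : signedCount (D.invSet w⁻¹ \ {D.α i}) (D.invSet (v⁻¹ * D.sX i)) =
      signedCount (D.invSet (w⁻¹ * D.sX i) \ {D.α i}) (D.invSet v⁻¹) := by
    rw [← signedCount_sdiff_singleton_right _ (fun h => h.2 rfl), ← signedCount_image
      (D.sX i).injective, image_sX_invSet_sdiff, image_sX_invSet_sdiff, mul_assoc,
      D.sX_mul_self, mul_one, Set.sdiff_singleton_eq_self haB]
  by_cases haA' : D.α i ∈ D.invSet w⁻¹
  · rw [signedCount_eq_sdiff_singleton_sub (invSet_finite (D.Wg.inv_mem hw)) haA' haB',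
      htransport, Set.sdiff_singleton_eq_self (haA.not.mpr (not_not.mpr haA'))]
  · rw [signedCount_eq_sdiff_singleton_add
      (invSet_finite (D.Wg.mul_mem (D.Wg.inv_mem hw) (D.sX_mem_Wg i))) (haA.mpr haA') haB,
      ← htransport, Set.sdiff_singleton_eq_self haA']
    ring

end KM

/-- if `s` is a simple reflection and `sv > v`, then
`ℓ_{sv}(w) = ℓ_v(sw) − 1` for every `w ∈ Wᵛ`. -/
theorem statement15 {I X Y : Type*} [Fintype I] [AddCommGroup X] [AddCommGroup Y]
    (D : KM I X Y)
    (i : I) (v : AddAut X) (hv : v ∈ D.Wg)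
    (h : D.len v < D.len (D.sX i * v)) :
    ∀ w : AddAut X, w ∈ D.Wg →
      D.rlen (D.sX i * v) w = D.rlen v (D.sX i * w) - 1 := by
  exact fun _ hw => KM.rlen_sX_mul (KM.inv_apply_alpha_mem_PhiPos hv h) hw
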